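/- arXiv:2207.00972 — 5 statements merged into one kernel-verified Lean document; each statement's English description precedes it below -/
import Mathlib

section
/- If the matching factor at position i of S has an occurrence starting at position p_i in R (i.e., R[p_i..p_i+ℓ_i−1] = S[i..i+ℓ_i−1] and ℓ_i is maximal such that S[i..i+ℓ_i−1] occurs in R), and ℓ_i > 0, then R[p_i+1..p_i+ℓ_i−1] is a prefix of S[i+1..] occurring in R, hence ℓ_{i+1} ≥ ℓ_i − 1 and if ℓ_{i+1} = ℓ_i − 1 then p_i + 1 is a valid occurrence for position i+1. -/
open List

/-- `ℓ` is the matching-statistics length of `S` w.r.t. `R` at position `i`. -/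
def IsMSLen {α : Type*} (R S : List α) (i ℓ : ℕ) : Prop :=
  ((S.drop i).take ℓ) <:+: R ∧ ℓ ≤ (S.drop i).length ∧
    ∀ k, k ≤ (S.drop i).length → ((S.drop i).take k) <:+: R → k ≤ ℓ

theorem List.take_pred_drop_succ {α : Type*} (l : List α) (i n : ℕ) :
    (l.drop (i + 1)).take (n - 1) = ((l.drop i).take n).drop 1 := by
  rw [List.drop_take, List.drop_drop]

namespace IsMSLen

variable {α : Type*} {R S : List α} {i ℓ : ℕ}

theorem infix_take_pred_drop_succ (h : IsMSLen R S i ℓ) :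
    (S.drop (i + 1)).take (ℓ - 1) <:+: R := by
  rw [List.take_pred_drop_succ]
  exact (List.drop_suffix 1 _).isInfix.trans h.1

theorem pred_le_length_drop_succ (h : IsMSLen R S i ℓ) :
    ℓ - 1 ≤ (S.drop (i + 1)).length := by
  have := h.2.1
  simp only [List.length_drop] at this ⊢
  omega

theorem pred_le {ℓ' : ℕ} (h : IsMSLen R S i ℓ) (h' : IsMSLen R S (i + 1) ℓ') :
    ℓ - 1 ≤ ℓ' :=
  h'.2.2 _ h.pred_le_length_drop_succ h.infix_take_pred_drop_succ

end IsMSLen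

theorem stmt1_general {α : Type*} (R S : List α) (i ℓ ℓ' p : ℕ)
    (h : IsMSLen R S i ℓ)
    (hocc : ((S.drop i).take ℓ) <+: R.drop p)
    (h' : IsMSLen R S (i + 1) ℓ') :
    ((S.drop (i + 1)).take (ℓ - 1)) <+: R.drop (p + 1) ∧
    ((S.drop (i + 1)).take (ℓ - 1)) <:+: R ∧
    ℓ - 1 ≤ ℓ' ∧
    (ℓ' = ℓ - 1 → ((S.drop (i + 1)).take ℓ') <+: R.drop (p + 1)) := by
  have hshift : (S.drop (i + 1)).take (ℓ - 1) <+: R.drop (p + 1) := by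
    rw [List.take_pred_drop_succ, ← List.drop_drop]
    exact hocc.drop 1
  exact ⟨hshift, h.infix_take_pred_drop_succ, h.pred_le h', fun he => he ▸ hshift⟩

theorem stmt1 {α : Type*} (R S : List α) (i ℓ ℓ' p : ℕ)
    (h : IsMSLen R S i ℓ) (hpos : 0 < ℓ)
    (hocc : ((S.drop i).take ℓ) <+: R.drop p)
    (h' : IsMSLen R S (i + 1) ℓ') :
    ((S.drop (i + 1)).take (ℓ - 1)) <+: R.drop (p + 1) ∧
    ((S.drop (i + 1)).take (ℓ - 1)) <:+: R ∧
    ℓ - 1 ≤ ℓ' ∧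
    (ℓ' = ℓ - 1 → ((S.drop (i + 1)).take ℓ') <+: R.drop (p + 1)) :=
  stmt1_general R S i ℓ ℓ' p h hocc h'
end

section
/- Let H be the set of heads, i.e., positions j with ℓ_j > ℓ_{j−1} − 1 (position 1 is always a head). For any position i, letting j = max{h ∈ H : h ≤ i} and k = i − j, we have ℓ_i = ℓ_j − k, and if (p_j, ℓ_j) is the matching statistics entry at j then p_j + k is a valid occurrence position for the matching factor at i (Lemma on recovering matching statistics from the compressed matching statistics). -/
open List

/-- `j` is a head of the matching statistics length sequence `ℓ`:
either `j` is the first position, or `ℓ j > ℓ (j-1) - 1`. -/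
def IsHead (ℓ : ℕ → ℕ) (j : ℕ) : Prop :=
  j = 0 ∨ (ℓ (j - 1) : ℤ) - 1 < (ℓ j : ℤ)

/-!
Matching statistics lengths drop by at most one from one position to the next, and at a
non-head they drop by at least one; so from the last head `j` up to `i` they drop by exactly
one per step, and the occurrence of the match at `j`, shifted by `i - j`, is an occurrence
of the match at `i`.
-/

theorem IsMSLen.le_add_one_of_succ {α : Type*} {R S : List α} {i a b : ℕ}
    (ha : IsMSLen R S i a) (hb : IsMSLen R S (i + 1) b) : a ≤ b + 1 := by
  obtain ⟨ha_infix, ha_len, -⟩ := ha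
  obtain ⟨-, -, hb_max⟩ := hb
  have htail : (S.drop (i + 1)).take (a - 1) = ((S.drop i).take a).drop 1 := by
    rw [List.drop_take, List.drop_drop, Nat.add_comm]
  have htail_infix : (S.drop (i + 1)).take (a - 1) <:+: R :=
    htail ▸ (List.drop_suffix 1 _).isInfix.trans ha_infix
  have htail_len : a - 1 ≤ (S.drop (i + 1)).length := by
    simp only [List.length_drop] at ha_len ⊢
    omega
  have := hb_max _ htail_len htail_infix
  omega

theorem succ_add_one_eq_of_not_isHead {ℓ : ℕ → ℕ} {h : ℕ} (hstep : ℓ h ≤ ℓ (h + 1) + 1)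
    (hnot : ¬ IsHead ℓ (h + 1)) : ℓ (h + 1) + 1 = ℓ h := by
  simp only [IsHead, Nat.add_sub_cancel, not_or, not_lt] at hnot
  omega

theorem eq_add_sub_of_succ_add_one_eq {f : ℕ → ℕ} {j i : ℕ} (hji : j ≤ i)
    (hdec : ∀ h, j ≤ h → h < i → f (h + 1) + 1 = f h) : f j = f i + (i - j) := by
  induction i, hji using Nat.le_induction with
  | base => simp
  | succ i hji ih =>
    rw [ih fun h hjh hhi => hdec h hjh (by omega), ← hdec i hji (by omega)]
    omega

theorem stmt2_general {α : Type*} (R S : List α) (ℓ p : ℕ → ℕ)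
    (hms : ∀ i, i < S.length → IsMSLen R S i (ℓ i))
    (hocc : ∀ i, i < S.length → ((S.drop i).take (ℓ i)) <+: R.drop (p i))
    (i j : ℕ) (hi : i < S.length) (hji : j ≤ i)
    (hmax : ∀ h, j < h → h ≤ i → ¬ IsHead ℓ h) :
    ℓ i = ℓ j - (i - j) ∧
    ((S.drop i).take (ℓ i)) <+: R.drop (p j + (i - j)) := by
  have hlen : ℓ j = ℓ i + (i - j) :=
    eq_add_sub_of_succ_add_one_eq hji fun h hjh hhi =>
      succ_add_one_eq_of_not_isHead
        ((hms h (by omega)).le_add_one_of_succ (hms (h + 1) (by omega)))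
        (hmax (h + 1) (by omega) hhi)
  refine ⟨by omega, ?_⟩
  have hshift := (hocc j (by omega)).drop (i - j)
  rwa [List.drop_take, List.drop_drop, List.drop_drop, show ℓ j - (i - j) = ℓ i by omega,
    Nat.add_sub_cancel' hji] at hshift

theorem stmt2 {α : Type*} (R S : List α) (ℓ p : ℕ → ℕ)
    (hms : ∀ i, i < S.length → IsMSLen R S i (ℓ i))
    (hocc : ∀ i, i < S.length → ((S.drop i).take (ℓ i)) <+: R.drop (p i))
    (i j : ℕ) (hi : i < S.length) (hji : j ≤ i)
    (hhead : IsHead ℓ j)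
    (hmax : ∀ h, j < h → h ≤ i → ¬ IsHead ℓ h) :
    ℓ i = ℓ j - (i - j) ∧
    ((S.drop i).take (ℓ i)) <+: R.drop (p j + (i - j)) :=
  stmt2_general R S ℓ p hms hocc i j hi hji hmax
end

section
/- If x_i = S (the suffix S[i..] falls lexicographically below the insert-point suffix), then R[SA_R[ip(i)−1]..] < S[i..] < R[SA_R[ip(i)]..]; and if x_i = L, then R[SA_R[ip(i)]..] < S[i..] < R[SA_R[ip(i)+1]..]. -/
open List

/-- `MFactor R SA suf U c ip`: `U` is the matching factor of the suffix `suf`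
w.r.t. `R` (the longest prefix of `suf` occurring in `R`), `c` is the mismatch
character (the character of `suf` following `U`), and `ip` is the insert point
of `suf` in the suffix array `SA` of `R`: the greatest rank `j` such that `U`
occurs at `SA j` and `R[SA j..] < Uc`, if such a rank exists, and otherwise
the least rank `j` such that `U` occurs at `SA j`. -/
def MFactor {α : Type*} [LinearOrder α] (R : List α) (SA : ℕ → ℕ)
    (suf U : List α) (c : α) (ip : ℕ) : Prop :=
  (∃ V, suf = U ++ c :: V) ∧ U <:+: R ∧ ¬ ((U ++ [c]) <:+: R) ∧
  (IsGreatest {j | j < R.length ∧ U <+: R.drop (SA j) ∧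
      List.Lex (· < ·) (R.drop (SA j)) (U ++ [c])} ip ∨
   ((∀ j, j < R.length → U <+: R.drop (SA j) →
      ¬ List.Lex (· < ·) (R.drop (SA j)) (U ++ [c])) ∧
    IsLeast {j | j < R.length ∧ U <+: R.drop (SA j)} ip))

/-! A list that does not start with `l` compares with every extension `l ++ x` as it compares
with `l`. Since no suffix of `R` starts with `Uc`, each suffix of `R` therefore lies on the same
side of `S[i..] = Uc ++ V` as of `Uc`. The neighbour of the insert point on the relevant side
either starts with `U`, and then lies on the far side of `Uc` by the extremality of `ip`, or it
does not, and then it compares with `Uc` as with `R[SA ip..]`, which starts with `U`;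
sortedness of `SA` settles that comparison. -/

namespace List

variable {α : Type*} [LinearOrder α] {l w : List α}

theorem lt_append_iff_of_not_prefix (h : ¬ l <+: w) (x : List α) :
    w < l ++ x ↔ w < l := by
  induction l generalizing w with
  | nil => exact absurd nil_prefix h
  | cons a l ih =>
    cases w with
    | nil => exact iff_of_true (nil_lt_cons _ _) (nil_lt_cons _ _)
    | cons b w =>
      simp only [cons_append, cons_lt_cons_iff]
      by_cases hab : b = a
      · subst hab
        rw [ih fun hp => h (cons_prefix_cons.2 ⟨rfl, hp⟩)]
      · simp only [hab, false_and, or_false]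

theorem append_lt_iff_of_not_prefix (h : ¬ l <+: w) (x : List α) :
    l ++ x < w ↔ l < w := by
  have hne : ∀ y, w ≠ l ++ y := fun y hw => h ⟨y, hw.symm⟩
  have hne' : w ≠ l := by simpa using hne []
  rw [← not_le, ← not_le, le_iff_lt_or_eq, le_iff_lt_or_eq, lt_append_iff_of_not_prefix h]
  simp only [hne x, hne', or_false]

theorem lt_of_lt_append_of_not_prefix {x y z : List α} (hy : ¬ l <+: y) (hx : l <+: x)
    (h : y < l ++ z) : y < x := by
  obtain ⟨x, rfl⟩ := hx
  exact (lt_append_iff_of_not_prefix hy x).2 ((lt_append_iff_of_not_prefix hy z).1 h)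

theorem lt_of_append_lt_of_not_prefix {x y z : List α} (hy : ¬ l <+: y) (hx : l <+: x)
    (h : l ++ z < y) : x < y := by
  obtain ⟨x, rfl⟩ := hx
  exact (append_lt_iff_of_not_prefix hy x).2 ((append_lt_iff_of_not_prefix hy z).1 h)

end List

namespace MFactor

variable {α : Type*} [LinearOrder α] {R : List α} {SA : ℕ → ℕ} {suf U : List α} {c : α}
  {ip : ℕ}

theorem not_prefix_drop (h : MFactor R SA suf U c ip) (n : ℕ) : ¬ U ++ [c] <+: R.drop n :=
  fun hp => h.2.2.1 (hp.isInfix.trans (drop_suffix n R).isInfix)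

theorem drop_lt_iff (h : MFactor R SA suf U c ip) (n : ℕ) :
    R.drop n < suf ↔ R.drop n < U ++ [c] := by
  obtain ⟨V, rfl⟩ := h.1
  simpa using lt_append_iff_of_not_prefix (h.not_prefix_drop n) V

theorem lt_drop_iff (h : MFactor R SA suf U c ip) (n : ℕ) :
    suf < R.drop n ↔ U ++ [c] < R.drop n := by
  obtain ⟨V, rfl⟩ := h.1
  simpa using append_lt_iff_of_not_prefix (h.not_prefix_drop n) V

theorem drop_pred_lt (hsort : ∀ r r', r < r' → r' < R.length →
      List.Lex (· < ·) (R.drop (SA r)) (R.drop (SA r')))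
    (h : MFactor R SA suf U c ip) (hS : U ++ [c] < R.drop (SA ip))
    (hip : 1 ≤ ip) : R.drop (SA (ip - 1)) < U ++ [c] := by
  rcases h.2.2.2 with hg | ⟨-, ⟨hiplt, hpre⟩, hleast⟩
  · exact absurd hS (asymm hg.1.2.2)
  have hsorted : R.drop (SA (ip - 1)) < R.drop (SA ip) := hsort _ _ (by omega) hiplt
  have hnpre : ¬ U <+: R.drop (SA (ip - 1)) := fun hp => by
    have := hleast ⟨by omega, hp⟩
    omega
  refine (lt_or_gt_of_ne fun heq => h.not_prefix_drop (SA (ip - 1)) (heq ▸ prefix_rfl))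
    |>.resolve_right fun hgt => ?_
  exact asymm hsorted (lt_of_append_lt_of_not_prefix hnpre hpre hgt)

theorem lt_drop_succ (hsort : ∀ r r', r < r' → r' < R.length →
      List.Lex (· < ·) (R.drop (SA r)) (R.drop (SA r')))
    (h : MFactor R SA suf U c ip) (hL : R.drop (SA ip) < U ++ [c])
    (hlen : ip + 1 < R.length) : U ++ [c] < R.drop (SA (ip + 1)) := by
  rcases h.2.2.2 with ⟨⟨-, hpre, -⟩, hgreatest⟩ | ⟨hnlt, ⟨hiplt, hpre⟩, -⟩
  · have hsorted : R.drop (SA ip) < R.drop (SA (ip + 1)) := hsort _ _ (by omega) hlen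
    refine (lt_or_gt_of_ne fun heq => h.not_prefix_drop (SA (ip + 1)) (heq ▸ prefix_rfl))
      |>.resolve_right fun hlt => ?_
    by_cases hp : U <+: R.drop (SA (ip + 1))
    · have := hgreatest ⟨hlen, hp, hlt⟩
      omega
    · exact asymm hsorted (lt_of_lt_append_of_not_prefix hp hpre hlt)
  · exact absurd hL (hnlt ip hiplt hpre)

end MFactor

theorem stmt9_general {α : Type*} [LinearOrder α] (R S : List α) (SA : ℕ → ℕ)
    (hsort : ∀ r r', r < r' → r' < R.length →
      List.Lex (· < ·) (R.drop (SA r)) (R.drop (SA r')))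
    (i : ℕ) (U : List α) (c : α) (ip : ℕ)
    (hmf : MFactor R SA (S.drop i) U c ip) :
    (List.Lex (· < ·) (U ++ [c]) (R.drop (SA ip)) → 1 ≤ ip →
      List.Lex (· < ·) (R.drop (SA (ip - 1))) (S.drop i) ∧
      List.Lex (· < ·) (S.drop i) (R.drop (SA ip))) ∧
    (List.Lex (· < ·) (R.drop (SA ip)) (U ++ [c]) → ip + 1 < R.length →
      List.Lex (· < ·) (R.drop (SA ip)) (S.drop i) ∧
      List.Lex (· < ·) (S.drop i) (R.drop (SA (ip + 1)))) := by
  refine ⟨fun hS hip => ?_, fun hL hlen => ?_⟩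
  · exact ⟨(hmf.drop_lt_iff _).2 (hmf.drop_pred_lt hsort hS hip), (hmf.lt_drop_iff _).2 hS⟩
  · exact ⟨(hmf.drop_lt_iff _).2 hL, (hmf.lt_drop_iff _).2 (hmf.lt_drop_succ hsort hL hlen)⟩

/-- Observation on insert points: if `Uc` falls below the insert-point suffix
(case `x = S`), then `R[SA[ip−1]..] < S[i..] < R[SA[ip]..]`; if it falls above
(case `x = L`), then `R[SA[ip]..] < S[i..] < R[SA[ip+1]..]`. -/
theorem stmt9 {α : Type*} [LinearOrder α] (R S : List α) (SA : ℕ → ℕ)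
    (hbij : Set.BijOn SA (Set.Iio R.length) (Set.Iio R.length))
    (hsort : ∀ r r', r < r' → r' < R.length →
      List.Lex (· < ·) (R.drop (SA r)) (R.drop (SA r')))
    (t : α) (hterm : R.getLast? = some t) (htS : ∀ a ∈ S, t < a)
    (hSR : ∀ a ∈ S, a ∈ R)
    (i : ℕ) (U : List α) (c : α) (ip : ℕ)
    (hU : U ≠ []) (hmf : MFactor R SA (S.drop i) U c ip) :
    (List.Lex (· < ·) (U ++ [c]) (R.drop (SA ip)) → 1 ≤ ip →
      List.Lex (· < ·) (R.drop (SA (ip - 1))) (S.drop i) ∧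
      List.Lex (· < ·) (S.drop i) (R.drop (SA ip))) ∧
    (List.Lex (· < ·) (R.drop (SA ip)) (U ++ [c]) → ip + 1 < R.length →
      List.Lex (· < ·) (R.drop (SA ip)) (S.drop i) ∧
      List.Lex (· < ·) (S.drop i) (R.drop (SA (ip + 1)))) :=
  stmt9_general R S SA hsort i U c ip hmf
end

section
/- If ip(d,i) < ip(d′,i′) then S_d[i..] < S_{d′}[i′..] lexicographically. -/
/-!
Every suffix of `R` ranked above the insert point `ip` is larger than `Uc`. So if `U'c' ≤ Uc`
and `ip < ip'`, the suffix at rank `ip'` exceeds `U'c'`, hence `ip'` is the least rank at which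
`U'` occurs; `Uc` lies between `U'c'` and that suffix, so `U'` is a prefix of `Uc`, and (as `Uc`
does not occur in `R`) of `U`, which occurs at the smaller rank `ip`. Thus `Uc < U'c'`, and since
`Uc` is not a prefix of `U'c'`, the comparison survives appending the rest of both suffixes.
-/

open List

namespace List

theorem Lex.append_of_not_prefix {α : Type*} {r : α → α → Prop} {l₁ l₂ : List α}
    (h : Lex r l₁ l₂) (hp : ¬ l₁ <+: l₂) (t₁ t₂ : List α) : Lex r (l₁ ++ t₁) (l₂ ++ t₂) := by
  induction h with
  | nil => exact absurd nil_prefix hp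
  | rel h => exact Lex.rel h
  | cons _ ih => exact Lex.cons (ih fun hp' => hp (cons_prefix_cons.2 ⟨rfl, hp'⟩))

theorem prefix_of_lt_of_lt {α : Type*} [LinearOrder α] {u x y z : List α}
    (hx : u <+: x) (hz : u <+: z) (hxy : x < y) (hyz : y < z) : u <+: y := by
  obtain ⟨v, rfl⟩ := hx
  obtain ⟨w, rfl⟩ := hz
  by_contra huy
  rcases lt_trichotomy u y with h | rfl | h
  · exact lt_asymm hyz (by simpa using Lex.append_of_not_prefix h huy w [])
  · exact huy prefix_rfl
  · by_cases hyu : y <+: u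
    · exact List.not_lt.2 (hyu.trans (prefix_append u v)).le hxy
    · exact lt_asymm hxy (by simpa using Lex.append_of_not_prefix h hyu [] v)

end List

namespace MFactor

variable {α : Type*} [LinearOrder α] {R : List α} {SA : ℕ → ℕ} {suf U : List α} {c : α}
  {ip : ℕ}

theorem not_prefix_of_infix (h : MFactor R SA suf U c ip) {w : List α} (hw : w <:+: R) :
    ¬ U ++ [c] <+: w :=
  fun hp => h.2.2.1 (hp.isInfix.trans hw)

theorem drop_ne (h : MFactor R SA suf U c ip) (n : ℕ) : R.drop n ≠ U ++ [c] :=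
  fun he => h.not_prefix_of_infix (R.drop_suffix n).isInfix (he ▸ prefix_rfl)

theorem lt_length (h : MFactor R SA suf U c ip) : ip < R.length := by
  rcases h.2.2.2 with hg | hl
  exacts [hg.1.1, hl.2.1.1]

theorem prefix_drop (h : MFactor R SA suf U c ip) : U <+: R.drop (SA ip) := by
  rcases h.2.2.2 with hg | hl
  exacts [hg.1.2.1, hl.2.1.2]

theorem lt_drop_of_lt
    (hsort : ∀ r r', r < r' → r' < R.length → Lex (· < ·) (R.drop (SA r)) (R.drop (SA r')))
    (h : MFactor R SA suf U c ip) {j : ℕ} (hj : j < R.length) (hij : ip < j) :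
    U ++ [c] < R.drop (SA j) := by
  refine lt_of_le_of_ne (le_of_not_gt fun hjU => ?_) (h.drop_ne _).symm
  have hip_j : R.drop (SA ip) < R.drop (SA j) := hsort ip j hij hj
  rcases h.2.2.2 with ⟨⟨-, hU, hipU⟩, hmax⟩ | ⟨hnone, ⟨hip, hU⟩, -⟩
  · have hUj := prefix_of_lt_of_lt hU (prefix_append U [c]) hip_j hjU
    exact hij.not_ge (hmax ⟨hj, hUj, hjU⟩)
  · have hUip : U ++ [c] < R.drop (SA ip) :=
      lt_of_le_of_ne (le_of_not_gt (hnone ip hip hU)) (h.drop_ne _).symm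
    exact lt_asymm hjU (hUip.trans hip_j)

theorem le_of_prefix_drop (h : MFactor R SA suf U c ip) (hip : U ++ [c] < R.drop (SA ip))
    {j : ℕ} (hj : j < R.length) (hU : U <+: R.drop (SA j)) : ip ≤ j := by
  rcases h.2.2.2 with hg | hl
  · exact absurd hg.1.2.2 (lt_asymm hip)
  · exact hl.2.2 ⟨hj, hU⟩

theorem concat_lt_concat_of_lt
    (hsort : ∀ r r', r < r' → r' < R.length → Lex (· < ·) (R.drop (SA r)) (R.drop (SA r')))
    {suf' U' : List α} {c' : α} {ip' : ℕ}
    (h : MFactor R SA suf U c ip) (h' : MFactor R SA suf' U' c' ip') (hlt : ip < ip') :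
    U ++ [c] < U' ++ [c'] := by
  by_contra hge
  rw [not_lt] at hge
  have hUc : U ++ [c] < R.drop (SA ip') := h.lt_drop_of_lt hsort h'.lt_length hlt
  have hU' : U' <+: U ++ [c] := by
    rcases hge.lt_or_eq with hgt | heq
    · exact prefix_of_lt_of_lt (prefix_append U' [c']) h'.prefix_drop hgt hUc
    · exact heq ▸ prefix_append U' [c']
  refine hlt.not_ge (h'.le_of_prefix_drop (hge.trans_lt hUc) h.lt_length ?_)
  rcases prefix_concat_iff.1 hU' with heq | hpre
  · exact absurd (heq ▸ prefix_rfl) (h.not_prefix_of_infix h'.2.1)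
  · exact hpre.trans h.prefix_drop

end MFactor

theorem stmt10_general {α : Type*} [LinearOrder α] (R : List α) (SA : ℕ → ℕ)
    (hsort : ∀ r r', r < r' → r' < R.length →
      List.Lex (· < ·) (R.drop (SA r)) (R.drop (SA r')))
    (Sd Sd' : List α) (i i' : ℕ)
    (U U' : List α) (c c' : α) (ip ip' : ℕ)
    (h1 : MFactor R SA (Sd.drop i) U c ip)
    (h2 : MFactor R SA (Sd'.drop i') U' c' ip')
    (hlt : ip < ip') :
    List.Lex (· < ·) (Sd.drop i) (Sd'.drop i') := by
  obtain ⟨V, hV⟩ := h1.1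
  obtain ⟨V', hV'⟩ := h2.1
  have hUc : U ++ [c] < U' ++ [c'] := h1.concat_lt_concat_of_lt hsort h2 hlt
  have hnp : ¬ U ++ [c] <+: U' ++ [c'] := by
    rw [prefix_concat_iff]
    rintro (heq | hpre)
    · exact lt_irrefl _ (heq ▸ hUc)
    · exact h1.not_prefix_of_infix h2.2.1 hpre
  rw [hV, hV']
  simpa using Lex.append_of_not_prefix hUc hnp V V'

/-- If `ip(d,i) < ip(d',i')` then `S_d[i..] < S_{d'}[i'..]` lexicographically. -/
theorem stmt10 {α : Type*} [LinearOrder α] (R : List α) (SA : ℕ → ℕ)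
    (hbij : Set.BijOn SA (Set.Iio R.length) (Set.Iio R.length))
    (hsort : ∀ r r', r < r' → r' < R.length →
      List.Lex (· < ·) (R.drop (SA r)) (R.drop (SA r')))
    (Sd Sd' : List α) (i i' : ℕ)
    (t : α) (hterm : R.getLast? = some t)
    (htS : ∀ a ∈ Sd, t < a) (htS' : ∀ a ∈ Sd', t < a)
    (hSR : ∀ a ∈ Sd, a ∈ R) (hSR' : ∀ a ∈ Sd', a ∈ R)
    (U U' : List α) (c c' : α) (ip ip' : ℕ)
    (h1 : MFactor R SA (Sd.drop i) U c ip)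
    (h2 : MFactor R SA (Sd'.drop i') U' c' ip')
    (hlt : ip < ip') :
    List.Lex (· < ·) (Sd.drop i) (Sd'.drop i') :=
  stmt10_general R SA hsort Sd Sd' i i' U U' c c' ip ip' h1 h2 hlt
end

section
/- Suppose ip(d,i) = ip(d′,i′). Then: (1) if ℓ_{d,i} < ℓ_{d′,i′} and x_{d,i} = S, then S_d[i..] < S_{d′}[i′..]; (2) if ℓ_{d,i} < ℓ_{d′,i′} and x_{d,i} = L, then S_{d′}[i′..] < S_d[i..]; (3) if ℓ_{d,i} = ℓ_{d′,i′}, x_{d,i} = S and x_{d′,i′} = L, then S_d[i..] < S_{d′}[i′..]; (4) if ℓ_{d,i} = ℓ_{d′,i′}, x_{d,i} = x_{d′,i′} and the mismatch characters satisfy c_{d,i} < c_{d′,i′}, then S_d[i..] < S_{d′}[i′..]. -/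
/-! Both matching factors are prefixes of `W = R[SA ip..]`, so the shorter one `U` is a prefix of
the longer one `U'`, and the character of `U'` after `U` is the character `b` of `W` after `U`.
Comparing `Uc` with `W` compares `c` with `b` (and `c ≠ b`, since `Uc` does not occur in `R`),
which decides the two suffixes at position `|U|`. When the lengths agree, `U = U'` and the
suffixes are decided by `c` against `c'`; in case (3), `c < c'` follows from `Uc < W < U'c'`. -/

open List

namespace List

variable {α : Type*}

theorem lex_append_left_iff {r : α → α → Prop} [Std.Irrefl r] (s : List α) {t₁ t₂ : List α} :
    Lex r (s ++ t₁) (s ++ t₂) ↔ Lex r t₁ t₂ := by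
  induction s with
  | nil => rfl
  | cons a s ih => simpa only [cons_append, lex_cons_iff] using ih

theorem Lex.append_cons_of_rel {r : α → α → Prop} {a b : α} (h : r a b) (s t₁ t₂ : List α) :
    Lex r (s ++ a :: t₁) (s ++ b :: t₂) :=
  Lex.append_left r (Lex.rel h) s

theorem rel_of_lex_append_singleton {r : α → α → Prop} [Std.Irrefl r] {s t : List α} {a b : α}
    (h : Lex r (s ++ [a]) (s ++ b :: t)) (hab : a ≠ b) : r a b := by
  rw [lex_append_left_iff, cons_lex_cons_iff] at h
  exact h.resolve_right fun h => hab h.1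

theorem rel_of_lex_append_cons_append_singleton {r : α → α → Prop} [Std.Irrefl r]
    {s t : List α} {a b : α} (h : Lex r (s ++ b :: t) (s ++ [a])) : r b a := by
  rw [lex_append_left_iff, cons_lex_cons_iff] at h
  exact h.resolve_right fun h => by cases h.2

theorem exists_append_cons_of_prefix_of_length_lt {s s' w : List α} (hs : s <+: w)
    (hs' : s' <+: w) (hlt : s.length < s'.length) :
    ∃ b t t', w = s ++ b :: t ∧ s' = s ++ b :: t' := by
  obtain ⟨u, rfl⟩ := prefix_of_prefix_length_le hs hs' hlt.le
  obtain ⟨v, rfl⟩ := hs'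
  cases u with
  | nil => simp at hlt
  | cons b t' => exact ⟨b, t' ++ v, t', by simp, rfl⟩

end List

namespace MFactor

variable {α : Type*} [LinearOrder α] {R : List α} {SA : ℕ → ℕ} {suf U : List α} {c : α} {ip : ℕ}

theorem eq_of_length_eq {suf' U' : List α} {c' : α} (h : MFactor R SA suf U c ip)
    (h' : MFactor R SA suf' U' c' ip) (hlen : U.length = U'.length) : U = U' :=
  (prefix_of_prefix_length_le h.prefix_drop h'.prefix_drop hlen.le).eq_of_length hlen

theorem lt_of_lex_drop (h : MFactor R SA suf U c ip) {b : α} {t : List α}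
    (hW : R.drop (SA ip) = U ++ b :: t) (hS : List.Lex (· < ·) (U ++ [c]) (R.drop (SA ip))) :
    c < b := by
  refine rel_of_lex_append_singleton (hW ▸ hS) fun hcb => h.2.2.1 ?_
  have hUb : U ++ [c] <+: R.drop (SA ip) := hW ▸ hcb ▸ (prefix_append_right_inj U).mpr ⟨t, rfl⟩
  exact hUb.isInfix.trans (drop_suffix _ _).isInfix

end MFactor

/-- Here `x = S` is expressed as `Uc < R[SA[ip]..]` and `x = L` as `R[SA[ip]..] < Uc`. -/
theorem stmt11_general {α : Type*} [LinearOrder α] (R : List α) (SA : ℕ → ℕ)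
    (Sd Sd' : List α) (i i' : ℕ)
    (U U' : List α) (c c' : α) (ip : ℕ)
    (h1 : MFactor R SA (Sd.drop i) U c ip)
    (h2 : MFactor R SA (Sd'.drop i') U' c' ip) :
    (U.length < U'.length → List.Lex (· < ·) (U ++ [c]) (R.drop (SA ip)) →
      List.Lex (· < ·) (Sd.drop i) (Sd'.drop i')) ∧
    (U.length < U'.length → List.Lex (· < ·) (R.drop (SA ip)) (U ++ [c]) →
      List.Lex (· < ·) (Sd'.drop i') (Sd.drop i)) ∧
    (U.length = U'.length → List.Lex (· < ·) (U ++ [c]) (R.drop (SA ip)) →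
      List.Lex (· < ·) (R.drop (SA ip)) (U' ++ [c']) →
      List.Lex (· < ·) (Sd.drop i) (Sd'.drop i')) ∧
    (U.length = U'.length →
      ((List.Lex (· < ·) (U ++ [c]) (R.drop (SA ip)) ∧
        List.Lex (· < ·) (U' ++ [c']) (R.drop (SA ip))) ∨
       (List.Lex (· < ·) (R.drop (SA ip)) (U ++ [c]) ∧
        List.Lex (· < ·) (R.drop (SA ip)) (U' ++ [c']))) →
      c < c' → List.Lex (· < ·) (Sd.drop i) (Sd'.drop i')) := by
  obtain ⟨V, hV⟩ := h1.1
  obtain ⟨V', hV'⟩ := h2.1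
  rw [hV, hV']
  refine ⟨fun hlt hS => ?_, fun hlt hL => ?_, fun hlen hS hL => ?_, fun hlen _ hcc' => ?_⟩
  · obtain ⟨b, t, t', hW, rfl⟩ := exists_append_cons_of_prefix_of_length_lt
      h1.prefix_drop h2.prefix_drop hlt
    simpa only [append_assoc, cons_append] using
      Lex.append_cons_of_rel (h1.lt_of_lex_drop hW hS) U V (t' ++ c' :: V')
  · obtain ⟨b, t, t', hW, rfl⟩ := exists_append_cons_of_prefix_of_length_lt
      h1.prefix_drop h2.prefix_drop hlt
    simpa only [append_assoc, cons_append] using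
      Lex.append_cons_of_rel (rel_of_lex_append_cons_append_singleton (hW ▸ hL))
        U (t' ++ c' :: V') V
  · obtain rfl := h1.eq_of_length_eq h2 hlen
    have hcc' : List.Lex (· < ·) (U ++ [c]) (U ++ [c']) := by
      rw [← lt_iff_lex_lt] at hS hL ⊢
      exact List.lt_trans hS hL
    rw [lex_append_left_iff, lex_singleton_iff] at hcc'
    exact Lex.append_cons_of_rel hcc' U V V'
  · obtain rfl := h1.eq_of_length_eq h2 hlen
    exact Lex.append_cons_of_rel hcc' U V V'

/-- Tie-breaking comparisons when the insert points coincide. Here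
`x = S` is expressed as `Uc < R[SA[ip]..]` and `x = L` as `R[SA[ip]..] < Uc`. -/
theorem stmt11 {α : Type*} [LinearOrder α] (R : List α) (SA : ℕ → ℕ)
    (hbij : Set.BijOn SA (Set.Iio R.length) (Set.Iio R.length))
    (hsort : ∀ r r', r < r' → r' < R.length →
      List.Lex (· < ·) (R.drop (SA r)) (R.drop (SA r')))
    (Sd Sd' : List α) (i i' : ℕ)
    (U U' : List α) (c c' : α) (ip : ℕ)
    (h1 : MFactor R SA (Sd.drop i) U c ip)
    (h2 : MFactor R SA (Sd'.drop i') U' c' ip) :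
    (U.length < U'.length → List.Lex (· < ·) (U ++ [c]) (R.drop (SA ip)) →
      List.Lex (· < ·) (Sd.drop i) (Sd'.drop i')) ∧
    (U.length < U'.length → List.Lex (· < ·) (R.drop (SA ip)) (U ++ [c]) →
      List.Lex (· < ·) (Sd'.drop i') (Sd.drop i)) ∧
    (U.length = U'.length → List.Lex (· < ·) (U ++ [c]) (R.drop (SA ip)) →
      List.Lex (· < ·) (R.drop (SA ip)) (U' ++ [c']) →
      List.Lex (· < ·) (Sd.drop i) (Sd'.drop i')) ∧
    (U.length = U'.length →
      ((List.Lex (· < ·) (U ++ [c]) (R.drop (SA ip)) ∧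
        List.Lex (· < ·) (U' ++ [c']) (R.drop (SA ip))) ∨
       (List.Lex (· < ·) (R.drop (SA ip)) (U ++ [c]) ∧
        List.Lex (· < ·) (R.drop (SA ip)) (U' ++ [c']))) →
      c < c' → List.Lex (· < ·) (Sd.drop i) (Sd'.drop i')) :=
  stmt11_general R SA Sd Sd' i i' U U' c c' ip h1 h2
end
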